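/- Let A be a finite-dimensional algebra over a field and f an idempotent of A such that the A-module A/⟨f⟩ has projective dimension at most 1. Then Ext^1_A(A/⟨f⟩, A/⟨f⟩) = 0. -/

import Mathlib

open CategoryTheory

noncomputable section

/-- Vanishing of the `n`-th Ext group of two `A`-modules. -/
def ExtVanish (A : Type) [Ring A] (n : ℕ) (X Y : ModuleCat.{0} A) : Prop :=
  Limits.IsZero (((Ext ℤ (ModuleCat.{0} A) n).obj (Opposite.op X)).obj Y)

/-- `M` belongs to `add X`: it is a direct summand of a finite direct sum of copies of `X`. -/
def InAdd (A : Type) [Ring A] (X M : ModuleCat.{0} A) : Prop :=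
  ∃ (n : ℕ) (i : M →ₗ[A] (Fin n → X)) (p : (Fin n → X) →ₗ[A] M),
    p.comp i = LinearMap.id

/-- `N` is a (first) syzygy of `M`: there is an exact sequence `0 → N → P → M → 0`
with `P` projective. -/
def IsSyzygyOf (A : Type) [Ring A] (N M : ModuleCat.{0} A) : Prop :=
  ∃ (P : ModuleCat.{0} A), Module.Projective A P ∧
    ∃ (ι : N →ₗ[A] P) (π : P →ₗ[A] M),
      Function.Injective ι ∧ Function.Surjective π ∧ Function.Exact ι π

/-- `N` is an `n`-th syzygy of `M`. -/
def IsNthSyzygyOf (A : Type) [Ring A] : ℕ → ModuleCat.{0} A → ModuleCat.{0} A → Prop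
  | 0, N, M => Nonempty (N ≅ M)
  | n + 1, N, M => ∃ K : ModuleCat.{0} A, IsSyzygyOf A K M ∧ IsNthSyzygyOf A n N K

/-- `N` is a (first) cosyzygy of `M`: there is an exact sequence `0 → M → I → N → 0`
with `I` injective. -/
def IsCosyzygyOf (A : Type) [Ring A] (N M : ModuleCat.{0} A) : Prop :=
  ∃ (I : ModuleCat.{0} A), Module.Injective A I ∧
    ∃ (ι : M →ₗ[A] I) (π : I →ₗ[A] N),
      Function.Injective ι ∧ Function.Surjective π ∧ Function.Exact ι π

/-- `N` is an `n`-th cosyzygy of `M`. -/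
def IsNthCosyzygyOf (A : Type) [Ring A] : ℕ → ModuleCat.{0} A → ModuleCat.{0} A → Prop
  | 0, N, M => Nonempty (N ≅ M)
  | n + 1, N, M => ∃ K : ModuleCat.{0} A, IsCosyzygyOf A K M ∧ IsNthCosyzygyOf A n N K

/-- The projective dimension of `M` is at most `n`. -/
def ProjDimLE (A : Type) [Ring A] (n : ℕ) (M : ModuleCat.{0} A) : Prop :=
  ∃ K : ModuleCat.{0} A, IsNthSyzygyOf A n K M ∧ Module.Projective A K

/-- The injective dimension of `M` is at most `n`. -/
def InjDimLE (A : Type) [Ring A] (n : ℕ) (M : ModuleCat.{0} A) : Prop :=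
  ∃ K : ModuleCat.{0} A, IsNthCosyzygyOf A n K M ∧ Module.Injective A K

/-- The underlying type of `D(A) = Hom_k(A, k)`. -/
def DualMod (k A : Type) [Field k] [Ring A] [Algebra k A] : Type := A →ₗ[k] k

instance (k A : Type) [Field k] [Ring A] [Algebra k A] : AddCommGroup (DualMod k A) :=
  inferInstanceAs (AddCommGroup (A →ₗ[k] k))

/-- Auxiliary scalar action for `DualMod`. -/
def dualSMul (k A : Type) [Field k] [Ring A] [Algebra k A] (a : A) (φ : A →ₗ[k] k) :
    A →ₗ[k] k := φ.comp (LinearMap.mulRight k a)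

/-- The left `A`-module structure on `D(A)`: `(a • φ) x = φ (x * a)`. -/
instance (k A : Type) [Field k] [Ring A] [Algebra k A] : Module A (DualMod k A) where
  smul a φ := dualSMul k A a φ
  one_smul φ := by
    show dualSMul k A 1 φ = φ
    unfold dualSMul; ext x; exact LinearMap.congr_arg (f := φ) (mul_one x)
  mul_smul a b φ := by
    show dualSMul k A (a * b) φ = dualSMul k A a (dualSMul k A b φ)
    unfold dualSMul; ext x; exact LinearMap.congr_arg (f := φ) (mul_assoc x a b).symm
  smul_zero a := by
    show dualSMul k A a 0 = 0
    unfold dualSMul; ext x; simp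
  smul_add a φ ψ := by
    show dualSMul k A a (φ + ψ) = dualSMul k A a φ + dualSMul k A a ψ
    unfold dualSMul; ext x; rfl
  add_smul a b φ := by
    show dualSMul k A (a + b) φ = dualSMul k A a φ + dualSMul k A b φ
    unfold dualSMul; ext x; exact (LinearMap.congr_arg (f := φ) (mul_add x a b)).trans (map_add (F := A →ₗ[k] k) φ _ _)
  zero_smul φ := by
    show dualSMul k A 0 φ = 0
    unfold dualSMul; ext x; exact (LinearMap.congr_arg (f := φ) (mul_zero x)).trans (map_zero (F := A →ₗ[k] k) φ)

/-- `D(A)`, the dual of the right regular module, as an object of `ModuleCat A`. -/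
def DualA (k A : Type) [Field k] [Ring A] [Algebra k A] : ModuleCat.{0} A :=
  ModuleCat.of A (DualMod k A)

/-- The idempotent ideal `⟨e⟩ = AeA`, as a left submodule of `A`. -/
def idemIdeal (A : Type) [Ring A] (e : A) : Submodule A A :=
  Submodule.span A (Set.range fun b : A => e * b)

/-- The quotient `A/⟨e⟩` as a left `A`-module. -/
def quotMod (A : Type) [Ring A] (e : A) : ModuleCat.{0} A :=
  ModuleCat.of A (A ⧸ idemIdeal A e)

/-- The left ideal `Ae = {x | x * e = x}` (for `e` idempotent), as a submodule of `A`. -/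
def leftPart (A : Type) [Ring A] (e : A) : Submodule A A where
  carrier := {x | x * e = x}
  add_mem' := by intro a b ha hb; simp only [Set.mem_setOf_eq] at *; rw [add_mul, ha, hb]
  zero_mem' := by simp
  smul_mem' := by intro c x hx; simp only [Set.mem_setOf_eq, smul_eq_mul] at *;
                  rw [mul_assoc, hx]

/-- `Ae` as an object of `ModuleCat A`. -/
def AeMod (A : Type) [Ring A] (e : A) : ModuleCat.{0} A :=
  ModuleCat.of A (leftPart A e)

/-- `M` is Gorenstein projective: `Ext^i_A(M, A) = 0` for all `i > 0`. -/
def IsGorensteinProjective (A : Type) [Ring A] (M : ModuleCat.{0} A) : Prop :=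
  ∀ i : ℕ, 0 < i → ExtVanish A i M (ModuleCat.of A A)

/-- `M` is Gorenstein injective: `Ext^i_A(D(A), M) = 0` for all `i > 0`. -/
def IsGorensteinInjective (k A : Type) [Field k] [Ring A] [Algebra k A]
    (M : ModuleCat.{0} A) : Prop :=
  ∀ i : ℕ, 0 < i → ExtVanish A i (DualA k A) M

/-- `M ∈ gen_l(Ae)`: `M` has a projective resolution whose terms in degrees `≤ l`
lie in `add (Ae)`. -/
def GenLE (A : Type) [Ring A] (e : A) (l : ℕ) (M : ModuleCat.{0} A) : Prop :=
  ∃ (P : ℕ → ModuleCat.{0} A) (d : ∀ n : ℕ, (P (n + 1) →ₗ[A] P n)) (π : P 0 →ₗ[A] M),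
    (∀ n, Module.Projective A (P n)) ∧
    Function.Surjective π ∧
    Function.Exact (d 0) π ∧
    (∀ n, Function.Exact (d (n + 1)) (d n)) ∧
    (∀ n ≤ l, InAdd A (AeMod A e) (P n))

/-!
For a two-sided ideal `I` with `I = I²` and a module `M` killed by `I`, every linear map
`u : I → M` vanishes, since `u (a * b) = a • u b = 0` for `a, b ∈ I`. Now take a presentation
`Q → P → A/I → 0` with `ε : P → A/I` and pick `p ∈ P` with `ε p = 1`. Then `P = ker ε + A p` and
`ker ε ∩ A p = I p`, so a map `ker ε → M` extends to `P` (by zero on `A p`) as soon as it kills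
`I p`, which it does by the first observation. Hence every `1`-cocycle `Q → M` of a projective
resolution of `A/I` is a coboundary, that is `Ext¹(A/I, M) = 0`. For `I = AfA` with `f`
idempotent, `I = I²` because `f * b = f * (f * b)`.
-/

open LinearMap

universe u

namespace Ideal

variable {A : Type*} [Ring A] {I : Ideal A} {M P : Type*} [AddCommGroup M] [Module A M]
  [AddCommGroup P] [Module A P]

theorem linearMap_eq_zero_of_le_smul (hI : I ≤ I • I) (hM : I ≤ Module.annihilator A M)
    (u : I →ₗ[A] M) : u = 0 := by
  suffices ∀ x ∈ I • I, ∃ hx : x ∈ I, u ⟨x, hx⟩ = 0 from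
    LinearMap.ext fun x ↦ (this x (hI x.2)).2
  intro x hx
  refine Submodule.smul_induction_on hx (fun r hr n hn ↦ ⟨I.mul_mem_left r hn, ?_⟩) ?_
  · change u (r • ⟨n, hn⟩) = 0
    rw [map_smul, Module.mem_annihilator.mp (hM hr)]
  · rintro x y ⟨hx, ux⟩ ⟨hy, uy⟩
    exact ⟨I.add_mem hx hy, by simpa [ux, uy] using u.map_add ⟨x, hx⟩ ⟨y, hy⟩⟩

theorem exists_extend_of_le_smul (hI : I ≤ I • I) (hM : I ≤ Module.annihilator A M)
    {ε : P →ₗ[A] A ⧸ I} (hε : Function.Surjective ε) (g : ker ε →ₗ[A] M) :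
    ∃ h : P →ₗ[A] M, h ∘ₗ (ker ε).subtype = g := by
  obtain ⟨p, hp⟩ := hε (Submodule.Quotient.mk 1)
  have hε_smul (a : A) : ε (a • p) = Submodule.Quotient.mk a := by
    rw [map_smul, hp, ← Submodule.Quotient.mk_smul, smul_eq_mul, mul_one]
  have hmem (a : A) (ha : a ∈ I) : a • p ∈ ker ε := by
    rwa [mem_ker, hε_smul, Submodule.Quotient.mk_eq_zero]
  have hg (a : A) (ha : a ∈ I) : g ⟨a • p, hmem a ha⟩ = 0 :=
    LinearMap.congr_fun (I.linearMap_eq_zero_of_le_smul hI hM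
      (g ∘ₗ (toSpanSingleton A P p).restrict hmem)) ⟨a, ha⟩
  have hagree : ∀ (x : ker ε) (y : A ∙ p), (x : P) = y →
      (⟨ker ε, g⟩ : P →ₗ.[A] M) x = (⟨A ∙ p, 0⟩ : P →ₗ.[A] M) y := by
    rintro ⟨x, hx⟩ ⟨y, hy⟩ rfl
    obtain ⟨a, rfl⟩ := Submodule.mem_span_singleton.mp hy
    rw [mem_ker, hε_smul, Submodule.Quotient.mk_eq_zero] at hx
    exact hg a hx
  have htop : ker ε ⊔ (A ∙ p) = ⊤ := by
    refine Submodule.eq_top_iff'.mpr fun x ↦ ?_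
    obtain ⟨a, ha⟩ := Submodule.Quotient.mk_surjective I (ε x)
    have hx : x - a • p ∈ ker ε := by rw [mem_ker, map_sub, hε_smul, ha, sub_self]
    simpa using Submodule.add_mem_sup hx
      (Submodule.smul_mem _ a (Submodule.mem_span_singleton_self p))
  refine ⟨((⟨ker ε, g⟩ : P →ₗ.[A] M).sup ⟨A ∙ p, 0⟩ hagree).toFun ∘ₗ
    (LinearEquiv.ofTop _ htop).symm.toLinearMap, LinearMap.ext fun x ↦ ?_⟩
  exact (LinearPMap.sup_apply hagree x 0 _ (add_zero _)).trans (add_zero _)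

theorem exists_comp_eq_of_exact (hI : I ≤ I • I) (hM : I ≤ Module.annihilator A M)
    {Q : Type*} [AddCommGroup Q] [Module A Q] {d : Q →ₗ[A] P} {ε : P →ₗ[A] A ⧸ I}
    (hε : Function.Surjective ε) (hdε : Function.Exact d ε) (φ : Q →ₗ[A] M)
    (hφ : ker d ≤ ker φ) : ∃ ψ : P →ₗ[A] M, ψ ∘ₗ d = φ := by
  let d' := d.codRestrict (ker ε) fun x ↦ mem_ker.mpr (hdε.apply_apply_eq_zero x)
  have hd' : Function.Surjective d' := fun ⟨y, hy⟩ ↦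
    (hdε y).mp hy |>.imp fun x hx ↦ Subtype.ext hx
  obtain ⟨ψ, hψ⟩ := I.exists_extend_of_le_smul hI hM hε
    ((ker d').liftQ φ (by rwa [ker_codRestrict]) ∘ₗ (d'.quotKerEquivOfSurjective hd').symm)
  exact ⟨ψ, LinearMap.ext fun x ↦ by simpa [d'] using LinearMap.congr_fun hψ (d' x)⟩

end Ideal

theorem CategoryTheory.ProjectiveResolution.isZero_ext_one {R : Type u} [Ring R]
    {Z Y : ModuleCat.{u} R} (P : ProjectiveResolution Z)
    (h : ∀ φ : P.complex.X 1 →ₗ[R] Y, ker (P.complex.d 1 0).hom ≤ ker φ →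
      ∃ ψ : P.complex.X 0 →ₗ[R] Y, ψ ∘ₗ (P.complex.d 1 0).hom = φ) :
    Limits.IsZero (((Ext ℤ (ModuleCat.{u} R) 1).obj (Opposite.op Z)).obj Y) := by
  refine Limits.IsZero.of_iso ?_ (P.isoExt 1 Y)
  rw [← HomologicalComplex.exactAt_iff_isZero_homology,
    HomologicalComplex.exactAt_iff' _ 0 1 2 (by simp) (by simp),
    ShortComplex.moduleCat_exact_iff]
  intro (φ : P.complex.X 1 ⟶ Y) (hφ : P.complex.d 2 1 ≫ φ = 0)
  have hker : ker (P.complex.d 1 0).hom ≤ ker φ.hom := by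
    rw [← (P.exact_succ 0).moduleCat_range_eq_ker]
    rintro _ ⟨x, rfl⟩
    exact congr($hφ x)
  obtain ⟨ψ, hψ⟩ := h φ.hom hker
  exact ⟨ModuleCat.ofHom ψ, ModuleCat.hom_ext hψ⟩

instance idemIdeal_isTwoSided {A : Type} [Ring A] (e : A) : Ideal.IsTwoSided (idemIdeal A e) where
  mul_mem_of_left c hx := by
    induction hx using Submodule.span_induction with
    | mem x hx =>
      obtain ⟨b, rfl⟩ := hx
      exact Submodule.subset_span ⟨b * c, (mul_assoc _ _ _).symm⟩
    | zero => simp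
    | add x y _ _ hx hy => simpa [add_mul] using add_mem hx hy
    | smul a x _ hx => simpa [mul_assoc] using (idemIdeal A e).smul_mem a hx

theorem idemIdeal_le_smul {A : Type} [Ring A] {f : A} (hf : IsIdempotentElem f) :
    idemIdeal A f ≤ idemIdeal A f • idemIdeal A f := by
  refine Submodule.span_le.mpr ?_
  rintro _ ⟨b, rfl⟩
  have hmem (c : A) : f * c ∈ idemIdeal A f := Submodule.subset_span ⟨c, rfl⟩
  simpa [← mul_assoc, hf.eq] using Submodule.smul_mem_smul (hmem 1) (hmem b)

theorem stmt_3_general (A : Type) [Ring A]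
    (f : A) (hf : IsIdempotentElem f) :
    ExtVanish A 1 (quotMod A f) (quotMod A f) := by
  obtain ⟨P⟩ := HasProjectiveResolution.out (Z := quotMod A f)
  have hε : Function.Surjective (P.π.f 0) :=
    (ModuleCat.epi_iff_surjective _).mp inferInstance
  have hdε : Function.Exact (P.complex.d 1 0) (P.π.f 0) :=
    (ShortComplex.ShortExact.moduleCat_exact_iff_function_exact _).mp P.exact₀
  exact P.isZero_ext_one fun φ ↦
    Ideal.exists_comp_eq_of_exact (idemIdeal_le_smul hf) Ideal.annihilator_quotient.ge hε hdε φ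

/-- If `A/⟨f⟩` has projective dimension at most one as an `A`-module,
then `Ext¹_A(A/⟨f⟩, A/⟨f⟩) = 0`. -/
theorem stmt_3 (k A : Type) [Field k] [Ring A] [Algebra k A] [FiniteDimensional k A]
    (f : A) (hf : IsIdempotentElem f)
    (hpd : ProjDimLE A 1 (quotMod A f)) :
    ExtVanish A 1 (quotMod A f) (quotMod A f) :=
  stmt_3_general A f hf
end
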